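/- Let r ≥ 1 and let G be a finitely additive ℚ_p-valued measure on (ℤ_p)^r satisfying the symmetry: for all clopen A ⊆ (ℤ_p)^r, G(A) − G(ι(A)) + G(τ(ι(A))) − G(τ⁻¹(A)) = 0, where ι(x₁,…,x_r) = (−x₁,…,−x_r) and τ(x₁,…,x_r) = (x₁+1,…,x_r+1). Then for all nonnegative integers n₁,…,n_{r−1}, n_r with n₁+⋯+n_r odd, ∫_{(ℤ_p)^r} (x₁−x₂)^{n₁}⋯(x_{r−1}−x_r)^{n_{r−1}} x_r^{n_r} dG(x₁,…,x_r) = 0. -/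

import Mathlib

open Filter Topology

/-- A `ℚ_p`-valued measure on `(ℤ_p)^r`: a compatible bounded family of functions
on `(ℤ/p^nℤ)^r`. -/
structure PadicMeasureV (p : ℕ) [Fact p.Prime] (r : ℕ) where
  val : ∀ n : ℕ, (Fin r → ZMod (p ^ n)) → ℚ_[p]
  compat : ∀ (n : ℕ) (x : Fin r → ZMod (p ^ n)),
    val n x = ∑ y ∈ Finset.univ.filter
      (fun y : Fin r → ZMod (p ^ (n + 1)) =>
        (fun j => ZMod.castHom (pow_dvd_pow p (Nat.le_succ n)) (ZMod (p ^ n)) (y j)) = x),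
      val (n + 1) y
  bounded : ∃ C : ℝ, ∀ (n : ℕ) (x : Fin r → ZMod (p ^ n)), ‖val n x‖ ≤ C

/-- Riemann sum of level `n` of `f` against the measure. -/
noncomputable def PadicMeasureV.riemannSum {p : ℕ} [Fact p.Prime] {r : ℕ}
    (μ : PadicMeasureV p r) (f : (Fin r → ℤ_[p]) → ℚ_[p]) (n : ℕ) : ℚ_[p] :=
  ∑ i : Fin r → ZMod (p ^ n), f (fun j => ((i j).val : ℤ_[p])) * μ.val n i

/-- `∫ f dμ = c` over `(ℤ_p)^r`, as a limit of Riemann sums. -/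
def PadicMeasureV.HasIntegral {p : ℕ} [Fact p.Prime] {r : ℕ}
    (μ : PadicMeasureV p r) (f : (Fin r → ℤ_[p]) → ℚ_[p]) (c : ℚ_[p]) : Prop :=
  Tendsto (μ.riemannSum f) atTop (𝓝 c)

/-!
By the symmetry relation, `G` kills every function `g - g ∘ ι + g ∘ τ ∘ ι - g ∘ τ` at each finite
level; for continuous `g` the Riemann sums of this function differ from those exact identities only
through the failure of the canonical lift `ZMod (p ^ n) → ℤ_[p]` to commute with `ι` and `τ`, an
error of size `p⁻ⁿ` which uniform continuity makes negligible. An odd function of the form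
`f = g₀ - g₀ ∘ τ` is of that shape, with `g = g₀ / 2`. The integrand is odd because its degree is
odd, and it is `g₀ - g₀ ∘ τ` for `g₀ x = ∏ (x_j - x_{j+1})^{n_j} · h(x_r)`, where the differences
are `τ`-invariant and `h(t) - h(t + 1) = t^{n_r}` is solved by a Bernoulli polynomial.
-/

open Polynomial

namespace PadicInt

variable {p : ℕ} [Fact p.Prime]

theorem dist_le_of_toZModPow_eq {k n : ℕ} {a b : Fin k → ℤ_[p]}
    (h : ∀ j, toZModPow n (a j) = toZModPow n (b j)) : dist a b ≤ (p : ℝ) ^ (-n : ℤ) :=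
  (dist_pi_le_iff (by positivity)).2 fun j => by
    rw [dist_eq_norm, norm_le_pow_iff_mem_span_pow, ← ker_toZModPow, RingHom.mem_ker, map_sub,
      h j, sub_self]

theorem toZModPow_natCast_val {n : ℕ} (a : ZMod (p ^ n)) : toZModPow n (a.val : ℤ_[p]) = a := by
  have : NeZero (p ^ n) := ⟨pow_ne_zero n (Fact.out : p.Prime).ne_zero⟩
  rw [map_natCast, ZMod.natCast_zmod_val]

theorem eventually_norm_sub_le_of_toZModPow_eq {k : ℕ} {E : Type*} [SeminormedAddCommGroup E]
    {g : (Fin k → ℤ_[p]) → E} (hg : Continuous g) {ε : ℝ} (hε : 0 < ε) :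
    ∀ᶠ n in atTop, ∀ a b : Fin k → ℤ_[p],
      (∀ j, toZModPow n (a j) = toZModPow n (b j)) → ‖g a - g b‖ ≤ ε := by
  obtain ⟨δ, hδ, hgδ⟩ :=
    Metric.uniformContinuous_iff.1 (CompactSpace.uniformContinuous_of_continuous hg) ε hε
  obtain ⟨N, hN⟩ := exists_pow_neg_lt p hδ
  filter_upwards [eventually_ge_atTop N] with n hn a b hab
  have hp : (1 : ℝ) ≤ p := mod_cast (Fact.out : p.Prime).one_lt.le
  have hclose : dist a b < δ := (dist_le_of_toZModPow_eq hab).trans_lt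
    ((zpow_le_zpow_right₀ hp (by simpa using hn)).trans_lt hN)
  exact (dist_eq_norm (g a) (g b)) ▸ (hgδ hclose).le

end PadicInt

theorem exists_aeval_sub_aeval_add_one_eq_pow {A : Type*} [CommRing A] [Algebra ℚ A] (m : ℕ) :
    ∃ P : ℚ[X], ∀ t : A, aeval t P - aeval (t + 1) P = t ^ m := by
  refine ⟨-((m + 1 : ℚ)⁻¹ • Polynomial.bernoulli (m + 1)), fun t => ?_⟩
  have shift : aeval (t + 1) (Polynomial.bernoulli (m + 1))
      = aeval t (Polynomial.bernoulli (m + 1)) + (m + 1 : ℚ) • t ^ m := by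
    have := congrArg (aeval t) (bernoulli_comp_one_add_X (m + 1))
    rw [aeval_comp] at this
    simpa [add_comm, ← Nat.cast_smul_eq_nsmul ℚ] using this
  rw [map_neg, map_neg, map_smul, map_smul, shift, smul_add, smul_smul,
    inv_mul_cancel₀ (by positivity), one_smul]
  abel

namespace PadicMeasureV

variable {p : ℕ} [Fact p.Prime] {k : ℕ}

def IsReflectionSymmetric (μ : PadicMeasureV p k) : Prop :=
  ∀ (n : ℕ) (i : Fin k → ZMod (p ^ n)),
    μ.val n i - μ.val n (-i) + μ.val n (-i + 1) - μ.val n (i - 1) = 0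

theorem tendsto_sum_mul_val_zero (μ : PadicMeasureV p k)
    {F : (n : ℕ) → (Fin k → ZMod (p ^ n)) → ℚ_[p]}
    (hF : ∀ ε > 0, ∀ᶠ n in atTop, ∀ i, ‖F n i‖ ≤ ε) :
    Tendsto (fun n => ∑ i, F n i * μ.val n i) atTop (𝓝 0) := by
  obtain ⟨C, hC⟩ := μ.bounded
  obtain ⟨C', hC'_pos, hC'⟩ : ∃ C' > 0, ∀ n i, ‖μ.val n i‖ ≤ C' :=
    ⟨max C 0 + 1, by positivity, fun n i => (hC n i).trans (by linarith [le_max_left C 0])⟩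
  refine NormedAddGroup.tendsto_nhds_zero.2 fun ε hε => ?_
  filter_upwards [hF (ε / (2 * C')) (by positivity)] with n hn
  calc ‖∑ i, F n i * μ.val n i‖ ≤ ε / (2 * C') * C' :=
        IsUltrametricDist.norm_sum_le_of_forall_le_of_nonneg (by positivity) fun i _ => by
          rw [norm_mul]
          exact mul_le_mul (hn i) (hC' n i) (norm_nonneg _) (by positivity)
    _ < ε := by field_simp; linarith

theorem sum_mul_val_reflect_eq_zero (μ : PadicMeasureV p k)
    (hsym : μ.IsReflectionSymmetric) (n : ℕ) (F : (Fin k → ZMod (p ^ n)) → ℚ_[p]) :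
    ∑ i, (F i - F (-i) + F (1 - i) - F (i + 1)) * μ.val n i = 0 := by
  have hneg : ∑ i, F (-i) * μ.val n i = ∑ i, F i * μ.val n (-i) :=
    Fintype.sum_equiv (Equiv.neg _) _ _ fun i => by simp
  have hreflect : ∑ i, F (1 - i) * μ.val n i = ∑ i, F i * μ.val n (-i + 1) :=
    Fintype.sum_equiv ((Equiv.neg _).trans (Equiv.addRight 1)) _ _ fun i => by
      simp [neg_add_eq_sub]
  have hshift : ∑ i, F (i + 1) * μ.val n i = ∑ i, F i * μ.val n (i - 1) :=
    Fintype.sum_equiv (Equiv.addRight 1) _ _ fun i => by simp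
  simp only [sub_mul, add_mul, Finset.sum_add_distrib, Finset.sum_sub_distrib, hneg, hreflect,
    hshift]
  rw [← Finset.sum_sub_distrib, ← Finset.sum_add_distrib, ← Finset.sum_sub_distrib]
  exact Finset.sum_eq_zero fun i _ => by rw [← mul_sub, ← mul_add, ← mul_sub, hsym, mul_zero]

theorem hasIntegral_sub_comp_neg_add_comp_one_sub_sub_comp_add_one (μ : PadicMeasureV p k)
    (hsym : μ.IsReflectionSymmetric)
    {g : (Fin k → ℤ_[p]) → ℚ_[p]} (hg : Continuous g) :
    μ.HasIntegral (fun x => g x - g (-x) + g (1 - x) - g (x + 1)) 0 := by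
  set lift : (n : ℕ) → (Fin k → ZMod (p ^ n)) → Fin k → ℤ_[p] :=
    fun n i j => ((i j).val : ℤ_[p])
  have hlift : ∀ n i j, PadicInt.toZModPow n (lift n i j) = i j :=
    fun n i j => PadicInt.toZModPow_natCast_val _
  -- after subtracting the vanishing sum for `g ∘ lift n`, only lifting errors of size `p⁻ⁿ` remain
  have hsum : ∀ n, μ.riemannSum (fun x => g x - g (-x) + g (1 - x) - g (x + 1)) n =
      ∑ i, ((g (lift n (-i)) - g (-lift n i)) + (g (1 - lift n i) - g (lift n (1 - i)))
        + (g (lift n (i + 1)) - g (lift n i + 1))) * μ.val n i := by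
    intro n
    rw [← sub_zero (μ.riemannSum _ n), riemannSum,
      ← μ.sum_mul_val_reflect_eq_zero hsym n (fun i => g (lift n i)), ← Finset.sum_sub_distrib]
    exact Finset.sum_congr rfl fun i _ => by ring
  rw [HasIntegral, funext hsum]
  refine μ.tendsto_sum_mul_val_zero fun ε hε => ?_
  filter_upwards [PadicInt.eventually_norm_sub_le_of_toZModPow_eq hg hε] with n hn i
  have hneg := hn (lift n (-i)) (-lift n i) fun j => by simp [hlift]
  have hreflect := hn (1 - lift n i) (lift n (1 - i)) fun j => by simp [hlift]
  have hshift := hn (lift n (i + 1)) (lift n i + 1) fun j => by simp [hlift]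
  exact (IsUltrametricDist.norm_add_le_max _ _).trans
    (max_le ((IsUltrametricDist.norm_add_le_max _ _).trans (max_le hneg hreflect)) hshift)

theorem hasIntegral_zero_of_odd (μ : PadicMeasureV p k)
    (hsym : μ.IsReflectionSymmetric)
    {f g : (Fin k → ℤ_[p]) → ℚ_[p]} (hg : Continuous g) (hf_odd : ∀ x, f (-x) = -f x)
    (hfg : ∀ x, f x = g x - g (x + 1)) :
    μ.HasIntegral f 0 := by
  have hf : f = fun x => g x / 2 - g (-x) / 2 + g (1 - x) / 2 - g (x + 1) / 2 := by
    funext x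
    have hfg_neg := hfg (-x)
    rw [hf_odd, neg_add_eq_sub] at hfg_neg
    linear_combination (hfg x - hfg_neg) / 2
  rw [hf]
  exact μ.hasIntegral_sub_comp_neg_add_comp_one_sub_sub_comp_add_one hsym (hg.div_const 2)

end PadicMeasureV

/-- If `G(A) − G(ι(A)) + G(τ(ι(A))) − G(τ⁻¹(A)) = 0` (with `ι` coordinatewise negation
and `τ` coordinatewise translation by `1`) then for exponents `n₁,…,n_r` of odd sum,
`∫ (x₁−x₂)^{n₁}⋯(x_{r−1}−x_r)^{n_{r−1}} x_r^{n_r} dG = 0`. -/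
theorem odd_weight_integral_vanishes (p : ℕ) [Fact p.Prime] (r : ℕ)
    (G : PadicMeasureV p (r + 1))
    (hsym : ∀ (n : ℕ) (i : Fin (r + 1) → ZMod (p ^ n)),
      G.val n i - G.val n (fun j => -(i j)) + G.val n (fun j => -(i j) + 1)
        - G.val n (fun j => i j - 1) = 0)
    (e : Fin (r + 1) → ℕ) (hodd : Odd (∑ j, e j)) :
    G.HasIntegral (fun x =>
      (∏ j : Fin r, ((x j.castSucc : ℚ_[p]) - (x j.succ : ℚ_[p])) ^ e j.castSucc)
        * (x (Fin.last r) : ℚ_[p]) ^ e (Fin.last r)) 0 := by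
  set M : (Fin (r + 1) → ℤ_[p]) → ℚ_[p] :=
    fun x => ∏ j : Fin r, ((x j.castSucc : ℚ_[p]) - (x j.succ : ℚ_[p])) ^ e j.castSucc
  have hM_add_one : ∀ x, M (x + 1) = M x := fun x => by simp [M]
  have hM_neg : ∀ x, M (-x) = (-1) ^ (∑ j : Fin r, e j.castSucc) * M x := fun x => by
    simp only [M, Pi.neg_apply, PadicInt.coe_neg, neg_sub_neg, ← Finset.prod_pow_eq_pow_sum,
      ← Finset.prod_mul_distrib, ← mul_pow, neg_one_mul, neg_sub]
  have hsign : (-1 : ℚ_[p]) ^ (∑ j : Fin r, e j.castSucc) * (-1) ^ e (Fin.last r) = -1 := by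
    rw [← pow_add, ← Fin.sum_univ_castSucc, hodd.neg_one_pow]
  show G.HasIntegral (fun x => M x * (x (Fin.last r) : ℚ_[p]) ^ e (Fin.last r)) 0
  obtain ⟨P, hP⟩ := exists_aeval_sub_aeval_add_one_eq_pow (A := ℚ_[p]) (e (Fin.last r))
  refine G.hasIntegral_zero_of_odd hsym
    (g := fun x => M x * aeval (x (Fin.last r) : ℚ_[p]) P) (by fun_prop) (fun x => ?_) fun x => ?_
  · simp only [hM_neg, Pi.neg_apply, PadicInt.coe_neg, neg_pow (x (Fin.last r) : ℚ_[p])]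
    linear_combination (M x * (x (Fin.last r) : ℚ_[p]) ^ e (Fin.last r)) * hsign
  · simp only [hM_add_one, Pi.add_apply, Pi.one_apply, PadicInt.coe_add, PadicInt.coe_one,
      ← mul_sub, hP]
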